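/- If a chord diagram contains a trigon of type B, then its reductivity is at most 3. (Paper's Lemma 2.4: if a spherical curve P has a trigon of type B, then r(P) ≤ 3.) -/

import Mathlib

/-!
Chord diagrams modeling spherical curves (Gauss diagrams).

A chord diagram with `n` chords is a fixed-point-free involution `f` on the
cyclically ordered set `ZMod (2*n)`; the unordered pairs `{a, f a}` are its chords.
-/

namespace SphericalCurveReductivity

/-- `x` lies in the open arc from `a` to `b` (in the positive cyclic direction). -/
def InArc {N : ℕ} (a b x : ZMod N) : Prop :=
  0 < (x - a).val ∧ (x - a).val < (b - a).val

/-- The chord `{a, f a}` crosses the chord `{c, f c}`: the four endpoints are pairwise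
distinct and exactly one of `c`, `f c` lies in the open arc from `a` to `f a`. -/
def Crosses {N : ℕ} (f : ZMod N → ZMod N) (a c : ZMod N) : Prop :=
  c ≠ a ∧ c ≠ f a ∧ f c ≠ a ∧ f c ≠ f a ∧
    Xor' (InArc a (f a) c) (InArc a (f a) (f c))

/-- A chord diagram is reducible if some chord crosses no other chord. -/
def Reducible {N : ℕ} (f : ZMod N → ZMod N) : Prop :=
  ∃ a, ∀ c, ¬ Crosses f a c

/-- The embedding of the points of the new chord diagram (after the I-move at the
chord `{a, b}`) into the old one: the points `a`, `b` are deleted and the points of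
the open arc from `a` to `b` appear in reversed order, followed by the points of the
open arc from `b` to `a` in their original order. -/
def imoveEmb (n : ℕ) (a b : ZMod (2 * n)) (k : ZMod (2 * (n - 1))) : ZMod (2 * n) :=
  if k.val + 1 < (b - a).val then a + (((b - a).val - 1 - k.val : ℕ) : ZMod (2 * n))
  else a + ((k.val + 2 : ℕ) : ZMod (2 * n))

/-- The induced map of points of the old chord diagram (other than `a`, `b`) to points
of the new chord diagram after the I-move at the chord `{a, b}`; inverse to `imoveEmb`. -/
def imoveProj (n : ℕ) (a b : ZMod (2 * n)) (x : ZMod (2 * n)) : ZMod (2 * (n - 1)) :=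
  if (x - a).val < (b - a).val then (((b - a).val - 1 - (x - a).val : ℕ) : ZMod (2 * (n - 1)))
  else (((x - a).val - 2 : ℕ) : ZMod (2 * (n - 1)))

/-- The I-move (inverse-half-twisted splice) at the chord `{a, f a}`: delete the two
points `a`, `f a` and reverse the order of the points along the open arc from `a`
to `f a`, producing a chord diagram with `n - 1` chords. -/
def IMove {n : ℕ} (f : ZMod (2 * n) → ZMod (2 * n)) (a : ZMod (2 * n))
    (k : ZMod (2 * (n - 1))) : ZMod (2 * (n - 1)) :=
  imoveProj n a (f a) (f (imoveEmb n a (f a) k))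

/-- `ReductivityLe m f` : the reductivity of the chord diagram `f` is at most `m`,
i.e. at most `m` successive I-moves transform `f` into a reducible chord diagram. -/
def ReductivityLe : ℕ → ∀ {n : ℕ}, (ZMod (2 * n) → ZMod (2 * n)) → Prop
  | 0, _, f => Reducible f
  | m + 1, n, f => Reducible f ∨ ∃ a : ZMod (2 * n), ReductivityLe m (IMove f a)

/-- An incoherent bigon: the two chords `{i, j}` and `{i+1, j+1}` with the four
endpoints pairwise distinct. -/
def IncoherentBigon {N : ℕ} (f : ZMod N → ZMod N) (i j : ZMod N) : Prop :=
  f i = j ∧ f (i + 1) = j + 1 ∧ ({i, j, i + 1, j + 1} : Finset (ZMod N)).card = 4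

/-- A coherent bigon: the two chords `{i, j+1}` and `{i+1, j}` with the four
endpoints pairwise distinct. -/
def CoherentBigon {N : ℕ} (f : ZMod N → ZMod N) (i j : ZMod N) : Prop :=
  f i = j + 1 ∧ f (i + 1) = j ∧ ({i, j, i + 1, j + 1} : Finset (ZMod N)).card = 4

/-- The six endpoints of a trigon with corners at the consecutive pairs
`(i, i+1)`, `(j, j+1)`, `(k, k+1)`. -/
def trigonSet {N : ℕ} (i j k : ZMod N) : Finset (ZMod N) :=
  {i, i + 1, j, j + 1, k, k + 1}

/-- A trigon: three chords whose six endpoints form the three pairs of cyclically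
consecutive points `(i, i+1)`, `(j, j+1)`, `(k, k+1)` (pairwise distinct), such that no
chord joins the two points of one of these pairs, so that the three chords connect the
three consecutive pairs in a triangle. -/
def Trigon {N : ℕ} (f : ZMod N → ZMod N) (i j k : ZMod N) : Prop :=
  (trigonSet i j k).card = 6 ∧
  (∀ x ∈ trigonSet i j k, f x ∈ trigonSet i j k) ∧
  f i ≠ i + 1 ∧ f j ≠ j + 1 ∧ f k ≠ k + 1

/-- A representative point of the third chord of a trigon (the chord not containing
`i` nor `i + 1`). -/
def trigonThird {N : ℕ} (f : ZMod N → ZMod N) (i j : ZMod N) : ZMod N :=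
  if j = f i ∨ j = f (i + 1) then j + 1 else j

/-- Exactly two of three propositions hold. -/
def ExactlyTwo (p q r : Prop) : Prop :=
  (p ∧ q ∧ ¬r) ∨ (p ∧ ¬q ∧ r) ∨ (¬p ∧ q ∧ r)

/-- Exactly one of three propositions holds. -/
def ExactlyOne (p q r : Prop) : Prop :=
  (p ∧ ¬q ∧ ¬r) ∨ (¬p ∧ q ∧ ¬r) ∨ (¬p ∧ ¬q ∧ r)

/-- Trigon of type A: exactly two of the three pairs of its chords cross. -/
def TrigonA {N : ℕ} (f : ZMod N → ZMod N) (i j k : ZMod N) : Prop :=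
  Trigon f i j k ∧
    ExactlyTwo (Crosses f i (i + 1)) (Crosses f i (trigonThird f i j))
      (Crosses f (i + 1) (trigonThird f i j))

/-- Trigon of type B: exactly one pair of its chords crosses. -/
def TrigonB {N : ℕ} (f : ZMod N → ZMod N) (i j k : ZMod N) : Prop :=
  Trigon f i j k ∧
    ExactlyOne (Crosses f i (i + 1)) (Crosses f i (trigonThird f i j))
      (Crosses f (i + 1) (trigonThird f i j))

/-- Trigon of type C: its three chords pairwise cross. -/
def TrigonC {N : ℕ} (f : ZMod N → ZMod N) (i j k : ZMod N) : Prop :=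
  Trigon f i j k ∧
    Crosses f i (i + 1) ∧ Crosses f i (trigonThird f i j) ∧
      Crosses f (i + 1) (trigonThird f i j)

/-- Trigon of type D: no two of its chords cross. -/
def TrigonD {N : ℕ} (f : ZMod N → ZMod N) (i j k : ZMod N) : Prop :=
  Trigon f i j k ∧
    ¬ Crosses f i (i + 1) ∧ ¬ Crosses f i (trigonThird f i j) ∧
      ¬ Crosses f (i + 1) (trigonThird f i j)

/-!
Unless the three chords of the trigon are twisted (`i ↔ x + 1`, `i + 1 ↔ y`, `x ↔ y + 1` for its
corners `(x, x + 1)`, `(y, y + 1)`), one of them, `{a, b}`, has `a + 1` and `b + 1` joined to two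
neighbouring points. The I-move at `{a, b}` reverses the arc from `a` to `b`, so `a + 1` and
`b + 1` become neighbours and a bigon appears. An incoherent bigon `{I, J}`, `{I + 1, J + 1}` has
reductivity at most 1: the I-move at `{I, J}` turns `{I + 1, J + 1}` into a chord joining
neighbours. A coherent bigon has reductivity at most 2: either its chord at `I` crosses nothing,
or a crossing chord separates the two corners of the bigon, and the I-move at it reverses exactly
one corner, which makes the bigon incoherent. In the twisted case the three chords pairwise cross
or pairwise do not cross, so the trigon is not of type B.
-/

lemma val_sub_eq_zero_iff {N : ℕ} {o x : ZMod N} : (x - o).val = 0 ↔ x = o := by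
  rw [ZMod.val_eq_zero, sub_eq_zero]

lemma nodup_of_card_toFinset {α : Type*} [DecidableEq α] {l : List α}
    (h : l.toFinset.card = l.length) : l.Nodup :=
  Multiset.toFinset_card_eq_card_iff_nodup.mp h

section CyclicPositions

variable {N : ℕ} [NeZero N]

lemma val_sub_eq_ite (x y : ZMod N) :
    (x - y).val = if y.val ≤ x.val then x.val - y.val else x.val + N - y.val := by
  split_ifs with h
  · exact ZMod.val_sub h
  · have hx := ZMod.val_lt x
    have hy' := ZMod.val_lt y
    have hy : (-y).val = N - y.val := by
      rw [ZMod.neg_val, if_neg (by rintro rfl; simp at h)]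
    rw [sub_eq_add_neg, ZMod.val_add, hy, Nat.mod_eq_of_lt (by omega)]
    omega

lemma val_sub_eq_ite_of_base (o x y : ZMod N) :
    (x - y).val = if (y - o).val ≤ (x - o).val then (x - o).val - (y - o).val
      else (x - o).val + N - (y - o).val := by
  rw [← val_sub_eq_ite, sub_sub_sub_cancel_right]

lemma val_sub_inj {o x y : ZMod N} : (x - o).val = (y - o).val ↔ x = y :=
  (ZMod.val_injective N).eq_iff.trans sub_left_inj

lemma val_add_one_sub {o x : ZMod N} (h : x + 1 ≠ o) : (x + 1 - o).val = (x - o).val + 1 := by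
  have hN : N ≠ 1 := by
    rintro rfl
    exact h (Subsingleton.elim _ _)
  have hlt := ZMod.val_lt (x - o)
  have hne : (x + 1 - o).val ≠ 0 := by rwa [Ne, val_sub_eq_zero_iff]
  rw [add_sub_right_comm, ZMod.val_add, ZMod.val_one'' hN] at hne ⊢
  rcases Nat.lt_or_ge ((x - o).val + 1) N with h' | h'
  · exact Nat.mod_eq_of_lt h'
  · simp [show (x - o).val + 1 = N by omega] at hne

lemma val_sub_of_add_one_eq {o x : ZMod N} (h : x + 1 = o) : (x - o).val = N - 1 := by
  obtain ⟨m, rfl⟩ := Nat.exists_eq_succ_of_ne_zero (NeZero.ne N)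
  rw [show x - o = -1 by rw [← h]; ring, ZMod.val_neg_one, Nat.succ_sub_one]

lemma eq_add_one_of_val_eq {x y : ZMod N} (h : y.val = x.val + 1) : y = x + 1 := by
  have hy := ZMod.val_lt y
  apply ZMod.val_injective
  rw [ZMod.val_add_of_lt] <;> rw [ZMod.val_one'' (by omega)] <;> omega

/-- Measured from a base point `o`, the arc from `a` to `b` either avoids `o` (first case) or
wraps around it (second case). -/
lemma inArc_iff_val_sub (o a b x : ZMod N) :
    InArc a b x ↔ ((a - o).val < (x - o).val ∧ (x - o).val < (b - o).val) ∨
      ((b - o).val < (a - o).val ∧ ((a - o).val < (x - o).val ∨ (x - o).val < (b - o).val)) := by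
  have hx := ZMod.val_lt (x - o)
  have hb := ZMod.val_lt (b - o)
  have ha := ZMod.val_lt (a - o)
  unfold InArc
  rw [val_sub_eq_ite_of_base o x a, val_sub_eq_ite_of_base o b a]
  by_cases hxa : x = a
  · subst hxa
    simp only [le_refl, if_true, Nat.sub_self, lt_self_iff_false, false_and, false_or]
    exact iff_of_false id (by omega)
  · have := (val_sub_inj (o := o)).not.mpr hxa
    split_ifs <;> omega

lemma inArc_add_one_iff {a b x : ZMod N} (hxa : x ≠ a) (hxb : x + 1 ≠ b) :
    InArc a b (x + 1) ↔ InArc a b x := by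
  have hx0 : (x - a).val ≠ 0 := val_sub_eq_zero_iff.not.mpr hxa
  have hxb' : (x + 1 - a).val ≠ (b - a).val := val_sub_inj.not.mpr hxb
  by_cases ha : x + 1 = a
  · simp only [InArc, ha, sub_self, ZMod.val_zero, lt_irrefl, false_and, false_iff,
      val_sub_of_add_one_eq ha, not_and, not_lt]
    exact fun _ => Nat.le_sub_one_of_lt (ZMod.val_lt _)
  · unfold InArc
    rw [val_add_one_sub ha] at hxb' ⊢
    omega

end CyclicPositions

section IMove

variable {n : ℕ} {a b : ZMod (2 * n)}

lemma val_imoveEmb_sub (hn : 2 ≤ n) (k : ZMod (2 * (n - 1))) :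
    (imoveEmb n a b k - a).val =
      if k.val + 1 < (b - a).val then (b - a).val - 1 - k.val else k.val + 2 := by
  have : NeZero (2 * n) := ⟨by omega⟩
  have : NeZero (2 * (n - 1)) := ⟨by omega⟩
  have hd := ZMod.val_lt (b - a)
  have hk := ZMod.val_lt k
  unfold imoveEmb
  split <;> rw [add_sub_cancel_left, ZMod.val_natCast] <;> exact Nat.mod_eq_of_lt (by omega)

lemma imoveEmb_ne_left (hn : 2 ≤ n) (hba : b ≠ a) (k : ZMod (2 * (n - 1))) :
    imoveEmb n a b k ≠ a := by
  have : NeZero (2 * n) := ⟨by omega⟩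
  intro he
  have h := val_imoveEmb_sub (a := a) (b := b) hn k
  have hd0 : (b - a).val ≠ 0 := val_sub_eq_zero_iff.not.mpr hba
  rw [he, sub_self, ZMod.val_zero] at h
  split at h <;> omega

lemma imoveEmb_ne_right (hn : 2 ≤ n) (k : ZMod (2 * (n - 1))) : imoveEmb n a b k ≠ b := by
  intro he
  have h := val_imoveEmb_sub (a := a) (b := b) hn k
  rw [he] at h
  split at h <;> omega

lemma val_imoveProj (hn : 2 ≤ n) (hba : b ≠ a) {x : ZMod (2 * n)} (hxa : x ≠ a)
    (hxb : x ≠ b) :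
    (imoveProj n a b x).val =
      if (x - a).val < (b - a).val then (b - a).val - 1 - (x - a).val else (x - a).val - 2 := by
  have : NeZero (2 * n) := ⟨by omega⟩
  have : NeZero (2 * (n - 1)) := ⟨by omega⟩
  have hx := ZMod.val_lt (x - a)
  have hd := ZMod.val_lt (b - a)
  have hx0 : (x - a).val ≠ 0 := val_sub_eq_zero_iff.not.mpr hxa
  have hd0 : (b - a).val ≠ 0 := val_sub_eq_zero_iff.not.mpr hba
  have hxd : (x - a).val ≠ (b - a).val := val_sub_inj.not.mpr hxb
  unfold imoveProj
  split <;> rw [ZMod.val_natCast] <;> exact Nat.mod_eq_of_lt (by omega)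

lemma imoveProj_imoveEmb (hn : 2 ≤ n) (hba : b ≠ a) (k : ZMod (2 * (n - 1))) :
    imoveProj n a b (imoveEmb n a b k) = k := by
  have : NeZero (2 * n) := ⟨by omega⟩
  have : NeZero (2 * (n - 1)) := ⟨by omega⟩
  apply ZMod.val_injective
  rw [val_imoveProj hn hba (imoveEmb_ne_left hn hba k) (imoveEmb_ne_right hn k),
    val_imoveEmb_sub hn k]
  have hk := ZMod.val_lt k
  have hd0 : (b - a).val ≠ 0 := val_sub_eq_zero_iff.not.mpr hba
  split_ifs <;> omega

lemma imoveEmb_imoveProj (hn : 2 ≤ n) (hba : b ≠ a) {x : ZMod (2 * n)} (hxa : x ≠ a)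
    (hxb : x ≠ b) : imoveEmb n a b (imoveProj n a b x) = x := by
  have : NeZero (2 * n) := ⟨by omega⟩
  refine (val_sub_inj (o := a)).mp ?_
  rw [val_imoveEmb_sub hn, val_imoveProj hn hba hxa hxb]
  have hx := ZMod.val_lt (x - a)
  have hd := ZMod.val_lt (b - a)
  have hd0 : (b - a).val ≠ 0 := val_sub_eq_zero_iff.not.mpr hba
  have hx0 : (x - a).val ≠ 0 := val_sub_eq_zero_iff.not.mpr hxa
  have hxd : (x - a).val ≠ (b - a).val := val_sub_inj.not.mpr hxb
  split_ifs <;> omega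

lemma imoveProj_inj (hn : 2 ≤ n) (hba : b ≠ a) {x y : ZMod (2 * n)} (hxa : x ≠ a)
    (hxb : x ≠ b) (hya : y ≠ a) (hyb : y ≠ b) : imoveProj n a b x = imoveProj n a b y ↔ x = y := by
  refine ⟨fun h => ?_, congrArg _⟩
  rw [← imoveEmb_imoveProj hn hba hxa hxb, ← imoveEmb_imoveProj hn hba hya hyb, h]

lemma IMove_imoveProj (hn : 2 ≤ n) {f : ZMod (2 * n) → ZMod (2 * n)} (hfa : f a = b)
    (hba : b ≠ a) {x : ZMod (2 * n)} (hxa : x ≠ a) (hxb : x ≠ b) :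
    IMove f a (imoveProj n a b x) = imoveProj n a b (f x) := by
  subst hfa
  rw [IMove, imoveEmb_imoveProj hn hba hxa hxb]

lemma IMove_involutive (hn : 2 ≤ n) {f : ZMod (2 * n) → ZMod (2 * n)}
    (hinv : Function.Involutive f) (hfree : ∀ z, f z ≠ z) (a : ZMod (2 * n)) :
    Function.Involutive (IMove f a) := by
  intro k
  set x := imoveEmb n a (f a) k
  have hxa : x ≠ a := imoveEmb_ne_left hn (hfree a) k
  have hxb : x ≠ f a := imoveEmb_ne_right hn k
  have hfxa : f x ≠ a := fun h => hxb (by rw [← h, hinv x])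
  have hfxb : f x ≠ f a := fun h => hxa (hinv.injective h)
  change IMove f a (imoveProj n a (f a) (f x)) = k
  rw [IMove_imoveProj hn rfl (hfree a) hfxa hfxb, hinv x, imoveProj_imoveEmb hn (hfree a)]

end IMove

section Adjacency

variable {n : ℕ} {a b x : ZMod (2 * n)}

lemma imoveProj_eq_imoveProj_add_one_add_one_of_inArc (hn : 2 ≤ n) (hba : b ≠ a)
    (hxa : x ≠ a) (hxb : x ≠ b) (hxa' : x + 1 ≠ a) (hxb' : x + 1 ≠ b) (hx : InArc a b x) :
    imoveProj n a b x = imoveProj n a b (x + 1) + 1 := by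
  have : NeZero (2 * n) := ⟨by omega⟩
  have : NeZero (2 * (n - 1)) := ⟨by omega⟩
  have hsucc := val_add_one_sub hxa'
  have hne : (x + 1 - a).val ≠ (b - a).val := val_sub_inj.not.mpr hxb'
  apply eq_add_one_of_val_eq
  rw [val_imoveProj hn hba hxa hxb, val_imoveProj hn hba hxa' hxb', hsucc]
  unfold InArc at hx
  rw [hsucc] at hne
  split_ifs <;> omega

lemma imoveProj_add_one_of_not_inArc (hn : 2 ≤ n) (hba : b ≠ a) (hxa : x ≠ a)
    (hxb : x ≠ b) (hxa' : x + 1 ≠ a) (hxb' : x + 1 ≠ b) (hx : ¬ InArc a b x) :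
    imoveProj n a b (x + 1) = imoveProj n a b x + 1 := by
  have : NeZero (2 * n) := ⟨by omega⟩
  have : NeZero (2 * (n - 1)) := ⟨by omega⟩
  have hsucc := val_add_one_sub hxa'
  have hx0 : (x - a).val ≠ 0 := val_sub_eq_zero_iff.not.mpr hxa
  have hxd : (x - a).val ≠ (b - a).val := val_sub_inj.not.mpr hxb
  have hd0 : (b - a).val ≠ 0 := val_sub_eq_zero_iff.not.mpr hba
  have hx1 := ZMod.val_lt (x + 1 - a)
  have hx1d : (x + 1 - a).val ≠ (b - a).val := val_sub_inj.not.mpr hxb'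
  rw [hsucc] at hx1 hx1d
  apply eq_add_one_of_val_eq
  rw [val_imoveProj hn hba hxa hxb, val_imoveProj hn hba hxa' hxb', hsucc]
  unfold InArc at hx
  split_ifs <;> omega

lemma imoveProj_add_one_add_one (hn : 2 ≤ n) (hba : b ≠ a) (ha : a + 1 ≠ b)
    (hb : b + 1 ≠ a) :
    imoveProj n a b (b + 1) = imoveProj n a b (a + 1) + 1 := by
  have : NeZero (2 * n) := ⟨by omega⟩
  have : NeZero (2 * (n - 1)) := ⟨by omega⟩
  have ha1 : (a + 1 - a).val = 1 := by rw [add_sub_cancel_left, ZMod.val_one'' (by omega)]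
  have hd1 : (a + 1 - a).val ≠ (b - a).val := val_sub_inj.not.mpr ha
  have hd := ZMod.val_lt (b + 1 - a)
  rw [val_add_one_sub hb] at hd
  have : Fact (1 < 2 * n) := ⟨by omega⟩
  apply eq_add_one_of_val_eq
  rw [val_imoveProj hn hba hb (add_ne_left.mpr one_ne_zero),
    val_imoveProj hn hba (add_ne_left.mpr one_ne_zero) ha, val_add_one_sub hb, ha1]
  rw [ha1] at hd1
  have hd0 : (b - a).val ≠ 0 := val_sub_eq_zero_iff.not.mpr hba
  split_ifs <;> omega

lemma imoveProj_add_one_or (hn : 2 ≤ n) (hba : b ≠ a)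
    (hxa : x ≠ a) (hxb : x ≠ b) (hxa' : x + 1 ≠ a) (hxb' : x + 1 ≠ b) :
    imoveProj n a b (x + 1) = imoveProj n a b x + 1 ∨
      imoveProj n a b x = imoveProj n a b (x + 1) + 1 := by
  by_cases hx : InArc a b x
  · exact Or.inr (imoveProj_eq_imoveProj_add_one_add_one_of_inArc hn hba hxa hxb hxa' hxb' hx)
  · exact Or.inl (imoveProj_add_one_of_not_inArc hn hba hxa hxb hxa' hxb' hx)

end Adjacency

section Crossing

variable {N : ℕ} {f : ZMod N → ZMod N}

lemma crosses_iff {a c : ZMod N} : Crosses f a c ↔ c ≠ a ∧ c ≠ f a ∧ f c ≠ a ∧ f c ≠ f a ∧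
    Xor (InArc a (f a) c) (InArc a (f a) (f c)) := Iff.rfl

lemma crosses_apply_iff (hinv : Function.Involutive f) {a c : ZMod N} :
    Crosses f a (f c) ↔ Crosses f a c := by
  rw [crosses_iff, crosses_iff, hinv c, xor_comm]
  tauto

lemma Crosses.symm [NeZero N] {a c : ZMod N} (h : Crosses f a c) : Crosses f c a := by
  obtain ⟨hca, hcb, hda, hdb, hx⟩ := crosses_iff.mp h
  refine crosses_iff.mpr ⟨hca.symm, hda.symm, hcb.symm, hdb.symm, ?_⟩
  have hc := val_sub_eq_zero_iff.not.mpr hca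
  have hd := val_sub_eq_zero_iff.not.mpr hda
  have hcb' := (val_sub_inj (o := a)).not.mpr hcb
  have hdb' := (val_sub_inj (o := a)).not.mpr hdb
  simp only [xor_def, inArc_iff_val_sub a, sub_self, ZMod.val_zero] at hx ⊢
  omega

lemma CoherentBigon.not_crosses [NeZero N] {I J : ZMod N} (hb : CoherentBigon f I J) :
    ¬ Crosses f I (I + 1) := by
  obtain ⟨hI, hI1, hcard⟩ := hb
  have hl := nodup_of_card_toFinset (l := [I, J, I + 1, J + 1]) (by simpa using hcard)
  simp only [List.nodup_cons, List.mem_cons, List.not_mem_nil, or_false, not_or, List.nodup_nil,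
    and_true] at hl
  obtain ⟨⟨hIJ, hII1, hIJ1⟩, ⟨hJI1, -⟩, -⟩ := hl
  have hJ0 : (J - I).val ≠ 0 := val_sub_eq_zero_iff.not.mpr (Ne.symm hIJ)
  have hJ1 : (J - I).val ≠ (I + 1 - I).val := val_sub_inj.not.mpr hJI1
  have hpos : (I + 1 - I).val = 1 := by simpa using val_add_one_sub (Ne.symm hII1)
  rw [crosses_iff, hI, hI1]
  rintro ⟨-, -, -, -, hx⟩
  simp only [xor_def, InArc, val_add_one_sub (Ne.symm hIJ1), hpos] at hx hJ1
  omega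

end Crossing

lemma ReductivityLe.succ : ∀ {m n : ℕ} {f : ZMod (2 * n) → ZMod (2 * n)},
    ReductivityLe m f → ReductivityLe (m + 1) f
  | 0, _, _, h => Or.inl h
  | _ + 1, _, _, h => h.imp_right fun ⟨a, ha⟩ => ⟨a, ha.succ⟩

lemma reducible_of_apply_eq_add_one {N : ℕ} {f : ZMod N → ZMod N} {x : ZMod N}
    (hx : f x = x + 1) : Reducible f := by
  refine ⟨x, fun c hc => ?_⟩
  have hempty : ∀ z, ¬ InArc x (f x) z := by
    rintro z ⟨hz0, hz1⟩
    rw [hx, add_sub_cancel_left, ZMod.val_one_eq_one_mod] at hz1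
    exact absurd (hz1.trans_le (Nat.mod_le _ _)) (by omega)
  rcases (crosses_iff.mp hc).2.2.2.2 with ⟨h, _⟩ | ⟨h, _⟩ <;> exact hempty _ h

section Bigons

variable {n : ℕ} {f : ZMod (2 * n) → ZMod (2 * n)} {a b u v w w' : ZMod (2 * n)}

lemma nodup_map_imoveProj (hn : 2 ≤ n) {l : List (ZMod (2 * n))}
    (hl : (a :: b :: l).Nodup) : (l.map (imoveProj n a b)).Nodup := by
  rw [List.nodup_cons, List.nodup_cons] at hl
  obtain ⟨ha, hb, hl⟩ := hl
  have ha' : a ∉ l := fun h => ha (List.mem_cons_of_mem _ h)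
  have hba : b ≠ a := fun h => ha (h ▸ List.mem_cons_self)
  exact hl.map_on fun _ hx _ hy h => (imoveProj_inj hn hba (ne_of_mem_of_not_mem hx ha')
    (ne_of_mem_of_not_mem hx hb) (ne_of_mem_of_not_mem hy ha') (ne_of_mem_of_not_mem hy hb)).mp h

lemma incoherentBigon_IMove (hn : 2 ≤ n) (hfa : f a = b)
    (hl : [a, b, u, w, v, w'].Nodup) (hu : f u = w) (hv : f v = w')
    (huv : imoveProj n a b v = imoveProj n a b u + 1)
    (hww : imoveProj n a b w' = imoveProj n a b w + 1) :
    IncoherentBigon (IMove f a) (imoveProj n a b u) (imoveProj n a b w) := by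
  have hmap := nodup_map_imoveProj hn hl
  simp only [List.nodup_cons, List.mem_cons, List.not_mem_nil, or_false, not_or, List.nodup_nil,
    and_true] at hl
  obtain ⟨⟨hab, hau, -, hav, -⟩, ⟨hbu, -, hbv, -⟩, -⟩ := hl
  refine ⟨?_, ?_, ?_⟩
  · rw [IMove_imoveProj hn hfa (Ne.symm hab) (Ne.symm hau) (Ne.symm hbu), hu]
  · rw [← huv, ← hww, IMove_imoveProj hn hfa (Ne.symm hab) (Ne.symm hav) (Ne.symm hbv), hv]
  · rw [← huv, ← hww]
    simpa using List.toFinset_card_of_nodup hmap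

lemma coherentBigon_IMove (hn : 2 ≤ n) (hfa : f a = b)
    (hl : [a, b, u, w, v, w'].Nodup) (hu : f u = w) (hv : f v = w')
    (huv : imoveProj n a b v = imoveProj n a b u + 1)
    (hww : imoveProj n a b w = imoveProj n a b w' + 1) :
    CoherentBigon (IMove f a) (imoveProj n a b u) (imoveProj n a b w') := by
  have hmap := nodup_map_imoveProj hn hl
  simp only [List.nodup_cons, List.mem_cons, List.not_mem_nil, or_false, not_or, List.nodup_nil,
    and_true] at hl
  obtain ⟨⟨hab, hau, -, hav, -⟩, ⟨hbu, -, hbv, -⟩, -⟩ := hl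
  refine ⟨?_, ?_, ?_⟩
  · rw [← hww, IMove_imoveProj hn hfa (Ne.symm hab) (Ne.symm hau) (Ne.symm hbu), hu]
  · rw [← huv, IMove_imoveProj hn hfa (Ne.symm hab) (Ne.symm hav) (Ne.symm hbv), hv]
  · rw [← huv, ← hww]
    convert List.toFinset_card_of_nodup hmap using 2
    · ext
      simp only [Finset.mem_insert, Finset.mem_singleton, List.mem_toFinset, List.map,
        List.mem_cons, List.not_mem_nil, or_false]
      tauto
    · rfl

end Bigons

section BigonReduction

variable {n : ℕ} {f : ZMod (2 * n) → ZMod (2 * n)} {I J : ZMod (2 * n)}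

lemma two_le_of_card_eq_four (hn : 1 ≤ n) {s : Finset (ZMod (2 * n))} (hs : s.card = 4) :
    2 ≤ n := by
  have : NeZero (2 * n) := ⟨by omega⟩
  have := s.card_le_univ
  rw [hs, ZMod.card] at this
  omega

lemma IncoherentBigon.reductivityLe_one (hn : 1 ≤ n) (hb : IncoherentBigon f I J) :
    ReductivityLe 1 f := by
  obtain ⟨hI, hI1, hcard⟩ := hb
  replace hn := two_le_of_card_eq_four hn hcard
  have hl := nodup_of_card_toFinset (l := [I, J, I + 1, J + 1]) (by simpa using hcard)
  simp only [List.nodup_cons, List.mem_cons, List.not_mem_nil, or_false, not_or, List.nodup_nil,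
    and_true] at hl
  obtain ⟨⟨hIJ, hII1, hIJ1⟩, ⟨hJI1, -⟩, -⟩ := hl
  refine Or.inr ⟨I, reducible_of_apply_eq_add_one (x := imoveProj n I J (I + 1)) ?_⟩
  rw [IMove_imoveProj hn hI (Ne.symm hIJ) (Ne.symm hII1) (Ne.symm hJI1), hI1,
    imoveProj_add_one_add_one hn (Ne.symm hIJ) (Ne.symm hJI1) (Ne.symm hIJ1)]

lemma CoherentBigon.exists_incoherentBigon_IMove (hn : 2 ≤ n) (hinv : Function.Involutive f)
    (hb : CoherentBigon f I J) {c : ZMod (2 * n)} (hc : Crosses f I c) :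
    ∃ P Q, IncoherentBigon (IMove f c) P Q := by
  have : NeZero (2 * n) := ⟨by omega⟩
  have hnc := hb.not_crosses
  obtain ⟨hI, hI1, hcard⟩ := hb
  have hl := nodup_of_card_toFinset (l := [I, J, I + 1, J + 1]) (by simpa using hcard)
  simp only [List.nodup_cons, List.mem_cons, List.not_mem_nil, or_false, not_or, List.nodup_nil,
    and_true] at hl
  obtain ⟨⟨hIJ, hII1, hIJ1⟩, ⟨hJI1, hJJ1⟩, hI1J1⟩ := hl
  obtain ⟨hIc, hIe, hJ1c, hJ1e, hx⟩ := crosses_iff.mp hc.symm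
  rw [hI] at hJ1c hJ1e hx
  have hI1c : I + 1 ≠ c := by rintro rfl; exact hnc hc
  have hJc : J ≠ c := by rintro rfl; exact hnc ((crosses_apply_iff hinv).mp (hI1 ▸ hc))
  have hI1e : I + 1 ≠ f c := fun h => hJc (by rw [← hI1, h, hinv c])
  have hJe : J ≠ f c := fun h => hI1c (by rw [← hinv (I + 1), hI1, h, hinv c])
  have hec : f c ≠ c := fun h => by simp [h, InArc] at hx
  have hinI1 := inArc_add_one_iff hIc hI1e
  have hinJ1 := inArc_add_one_iff hJc hJ1e
  by_cases hin : InArc c (f c) I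
  · have hout : ¬ InArc c (f c) J := by rw [← hinJ1]; simp_all [xor_def]
    exact ⟨_, _, incoherentBigon_IMove hn rfl (by grind [List.nodup_cons]) hI1 hI
      (imoveProj_eq_imoveProj_add_one_add_one_of_inArc hn hec hIc hIe hI1c hI1e hin)
      (imoveProj_add_one_of_not_inArc hn hec hJc hJe hJ1c hJ1e hout)⟩
  · have hinJ : InArc c (f c) J := by rw [← hinJ1]; simp_all [xor_def]
    exact ⟨_, _, incoherentBigon_IMove hn rfl (by grind [List.nodup_cons]) hI hI1
      (imoveProj_add_one_of_not_inArc hn hec hIc hIe hI1c hI1e hin)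
      (imoveProj_eq_imoveProj_add_one_add_one_of_inArc hn hec hJc hJe hJ1c hJ1e hinJ)⟩

lemma CoherentBigon.reductivityLe_two (hn : 1 ≤ n) (hinv : Function.Involutive f)
    (hb : CoherentBigon f I J) : ReductivityLe 2 f := by
  by_cases hred : ∀ c, ¬ Crosses f I c
  · exact Or.inl ⟨I, hred⟩
  obtain ⟨c, hc⟩ := not_forall_not.mp hred
  have hn2 := two_le_of_card_eq_four hn hb.2.2
  obtain ⟨P, Q, hPQ⟩ := hb.exists_incoherentBigon_IMove hn2 hinv hc
  exact Or.inr ⟨c, hPQ.reductivityLe_one (by omega)⟩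

end BigonReduction

lemma reductivityLe_three_of_adjacent {n : ℕ} (hn : 1 ≤ n) {f : ZMod (2 * n) → ZMod (2 * n)}
    (hinv : Function.Involutive f) (hfree : ∀ z, f z ≠ z) {a b w w' : ZMod (2 * n)}
    (hfa : f a = b) (hl : [a, b, a + 1, w, b + 1, w'].Nodup) (hw : f (a + 1) = w)
    (hw' : f (b + 1) = w') (hww : w' = w + 1 ∨ w = w' + 1) : ReductivityLe 3 f := by
  subst hfa
  have : NeZero (2 * n) := ⟨by omega⟩
  have hn3 : 6 ≤ 2 * n := by simpa using hl.length_le_card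
  have hn2 : 2 ≤ n := by omega
  have hl' := hl
  simp only [List.nodup_cons, List.mem_cons, List.not_mem_nil, or_false, not_or, List.nodup_nil,
    and_true] at hl'
  obtain ⟨⟨hab, ha1, haw, hab1, haw'⟩, ⟨hb1, hbw, hbb1, hbw'⟩, -⟩ := hl'
  have huv := imoveProj_add_one_add_one hn2 (Ne.symm hab) (Ne.symm hb1) (Ne.symm hab1)
  have hproj : imoveProj n a (f a) w' = imoveProj n a (f a) w + 1 ∨
      imoveProj n a (f a) w = imoveProj n a (f a) w' + 1 := by
    rcases hww with rfl | rfl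
    · exact imoveProj_add_one_or hn2 (Ne.symm hab) (Ne.symm haw) (Ne.symm hbw) (Ne.symm haw')
        (Ne.symm hbw')
    · exact (imoveProj_add_one_or hn2 (Ne.symm hab) (Ne.symm haw') (Ne.symm hbw') (Ne.symm haw)
        (Ne.symm hbw)).symm
  refine Or.inr ⟨a, ?_⟩
  rcases hproj with hproj | hproj
  · exact ((incoherentBigon_IMove hn2 rfl hl hw hw' huv hproj).reductivityLe_one
      (by omega)).succ
  · exact (coherentBigon_IMove hn2 rfl hl hw hw' huv hproj).reductivityLe_two (by omega)
      (IMove_involutive hn2 hinv hfree a)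

section Trigon

variable {N : ℕ} {f : ZMod N → ZMod N}

/-- The three twisted chords all cross when `x` comes before `y` after `i + 1`, and none cross
otherwise. -/
lemma crosses_iff_of_twisted [NeZero N] {i x y : ZMod N}
    (hl : [i, x + 1, i + 1, y, x, y + 1].Nodup) (hi : f i = x + 1) (hi1 : f (i + 1) = y)
    (hx : f x = y + 1) :
    (Crosses f i (i + 1) ↔ Crosses f i x) ∧ (Crosses f (i + 1) x ↔ Crosses f i x) := by
  simp only [List.nodup_cons, List.mem_cons, List.not_mem_nil, or_false, not_or, List.nodup_nil,
    and_true] at hl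
  obtain ⟨⟨hix1, hii1, hiy, hix, hiy1⟩, ⟨hx1i1, hx1y, hx1x, hx1y1⟩, ⟨hi1y, hi1x, hi1y1⟩,
    ⟨hyx, hyy1⟩, hxy1⟩ := hl
  have hpi1 : (i + 1 - i).val = 1 := by simpa using val_add_one_sub (Ne.symm hii1)
  have hpx1 := val_add_one_sub (Ne.symm hix1)
  have hpy1 := val_add_one_sub (Ne.symm hiy1)
  simp only [crosses_iff, hi, hi1, hx, xor_def, inArc_iff_val_sub i, ne_eq,
    ← val_sub_inj (o := i), hpi1, hpx1, hpy1, sub_self, ZMod.val_zero] at *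
  omega

lemma not_exactlyOne_crosses_of_twisted [NeZero N] (hinv : Function.Involutive f)
    {i x y t : ZMod N} (hl : [i, x + 1, i + 1, y, x, y + 1].Nodup) (hi : f i = x + 1)
    (hi1 : f (i + 1) = y) (hx : f x = y + 1) (ht : t = x ∨ t = y + 1) :
    ¬ ExactlyOne (Crosses f i (i + 1)) (Crosses f i t) (Crosses f (i + 1) t) := by
  have hpartner : ∀ a, Crosses f a (y + 1) ↔ Crosses f a x :=
    fun a => hx ▸ crosses_apply_iff hinv
  obtain ⟨h1, h2⟩ := crosses_iff_of_twisted hl hi hi1 hx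
  rcases ht with rfl | rfl <;> simp only [ExactlyOne, hpartner, h1, h2] <;> tauto

lemma exists_chords_of_corner (hinv : Function.Involutive f) (hfree : ∀ z, f z ≠ z)
    {i x y : ZMod N} (hl : [i, i + 1, x, x + 1, y, y + 1].Nodup)
    (hmaps : ∀ z ∈ [i, i + 1, x, x + 1, y, y + 1], f z ∈ [i, i + 1, x, x + 1, y, y + 1])
    (hy : f y ≠ y + 1) {p' : ZMod N} (hp : (f i = x ∧ p' = x + 1) ∨ (f i = x + 1 ∧ p' = x)) :
    ∃ q q', f (i + 1) = q ∧ f p' = q' ∧ (p' = f i + 1 ∨ f i = p' + 1) ∧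
      (q' = q + 1 ∨ q = q' + 1) ∧ [i, f i, i + 1, q, p', q'].Nodup ∧
      trigonThird f i x = p' ∧ trigonThird f i y = q' := by
  simp only [List.mem_cons, List.not_mem_nil, or_false] at hmaps
  have h1 := hmaps (i + 1) (by simp)
  have h2 := hmaps p' (by rcases hp with ⟨-, rfl⟩ | ⟨-, rfl⟩ <;> simp)
  have h3 := hmaps y (by simp)
  have h4 := hmaps (y + 1) (by simp)
  have hff : ∀ z, f (f z) = z := hinv
  have := hfree (i + 1)
  have := hfree y
  have := hfree (y + 1)
  have := hfree p'
  refine ⟨f (i + 1), f p', rfl, rfl, ?_⟩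
  simp only [List.nodup_cons, List.mem_cons, List.not_mem_nil, or_false, not_or, List.nodup_nil,
    and_true, trigonThird] at hl ⊢
  rcases hp with ⟨hp, rfl⟩ | ⟨hp, rfl⟩ <;> rw [hp] <;> grind (splits := 30)

lemma Trigon.exists_chords (hinv : Function.Involutive f) (hfree : ∀ z, f z ≠ z)
    {i j k : ZMod N} (ht : Trigon f i j k) :
    ∃ p p' q q', f i = p ∧ f (i + 1) = q ∧ f p' = q' ∧ (p' = p + 1 ∨ p = p' + 1) ∧
      (q' = q + 1 ∨ q = q' + 1) ∧ [i, p, i + 1, q, p', q'].Nodup ∧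
      (trigonThird f i j = p' ∨ trigonThird f i j = q') := by
  obtain ⟨hcard, hmaps, hi, hj, hk⟩ := ht
  have hl := nodup_of_card_toFinset (l := [i, i + 1, j, j + 1, k, k + 1])
    (by simpa [trigonSet] using hcard)
  replace hmaps : ∀ z ∈ [i, i + 1, j, j + 1, k, k + 1],
      f z ∈ [i, i + 1, j, j + 1, k, k + 1] := by
    simpa [trigonSet] using hmaps
  have hperm : [i, i + 1, j, j + 1, k, k + 1].Perm [i, i + 1, k, k + 1, j, j + 1] :=
    List.Perm.append_left [i, i + 1]
      (List.perm_append_comm (l₁ := [j, j + 1]) (l₂ := [k, k + 1]))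
  have hl' := hperm.nodup_iff.mp hl
  have hmaps' : ∀ z ∈ [i, i + 1, k, k + 1, j, j + 1], f z ∈ [i, i + 1, k, k + 1, j, j + 1] :=
    fun z hz => hperm.mem_iff.mp (hmaps z (hperm.mem_iff.mpr hz))
  have hfi : f i = i ∨ f i = i + 1 ∨ f i = j ∨ f i = j + 1 ∨ f i = k ∨ f i = k + 1 := by
    simpa using hmaps i (by simp)
  rcases hfi with h | h | h | h | h | h
  · exact absurd h (hfree i)
  · exact absurd h hi
  · obtain ⟨q, q', hq, hq', hpp, hqq, hl, hx, -⟩ :=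
      exists_chords_of_corner hinv hfree hl hmaps hk (Or.inl ⟨h, rfl⟩)
    exact ⟨_, _, q, q', rfl, hq, hq', hpp, hqq, hl, Or.inl hx⟩
  · obtain ⟨q, q', hq, hq', hpp, hqq, hl, hx, -⟩ :=
      exists_chords_of_corner hinv hfree hl hmaps hk (Or.inr ⟨h, rfl⟩)
    exact ⟨_, _, q, q', rfl, hq, hq', hpp, hqq, hl, Or.inl hx⟩
  · obtain ⟨q, q', hq, hq', hpp, hqq, hl, -, hy⟩ :=
      exists_chords_of_corner hinv hfree hl' hmaps' hj (Or.inl ⟨h, rfl⟩)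
    exact ⟨_, _, q, q', rfl, hq, hq', hpp, hqq, hl, Or.inr hy⟩
  · obtain ⟨q, q', hq, hq', hpp, hqq, hl, -, hy⟩ :=
      exists_chords_of_corner hinv hfree hl' hmaps' hj (Or.inr ⟨h, rfl⟩)
    exact ⟨_, _, q, q', rfl, hq, hq', hpp, hqq, hl, Or.inr hy⟩

end Trigon

/-- If a chord diagram contains a trigon of type B, then its reductivity is at most 3
(Lemma 2.4). -/
theorem trigonB_reductivity_le_three {n : ℕ} (hn : 1 ≤ n)
    (f : ZMod (2 * n) → ZMod (2 * n)) (hinv : Function.Involutive f)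
    (hfree : ∀ a, f a ≠ a) (i j k : ZMod (2 * n)) (ht : TrigonB f i j k) :
    ReductivityLe 3 f := by
  have : NeZero (2 * n) := ⟨by omega⟩
  obtain ⟨ht, hB⟩ := ht
  obtain ⟨p, p', q, q', hp, hq, hpq, hpp', hqq', hl, hthird⟩ := ht.exists_chords hinv hfree
  rcases hpp' with rfl | rfl <;> rcases hqq' with rfl | rfl
  · exact reductivityLe_three_of_adjacent hn hinv hfree hp hl hq hpq (Or.inl rfl)
  · exact reductivityLe_three_of_adjacent hn hinv hfree hp hl hq hpq (Or.inr rfl)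
  · exact absurd hB (not_exactlyOne_crosses_of_twisted hinv hl hp hq hpq hthird)
  · exact reductivityLe_three_of_adjacent (w := i) hn hinv hfree hpq
      (by grind [List.nodup_cons]) (by rw [← hp, hinv]) (by rw [← hq, hinv]) (Or.inl rfl)

end SphericalCurveReductivity
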